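/- For any non-complete finite simple graph G of order n with minimum degree δ ≥ 1 and independence number α, we have gp(μ(G)) ≤ n + α − 1. -/
import Mathlib

open SimpleGraph Sum

variable {V : Type*}

/-- The Mycielskian of a graph `G`: vertices are `some (Sum.inl v)` (original vertices),
`some (Sum.inr v)` (twin vertices), and `none` (the root `u*`). -/
def Mycielskian (G : SimpleGraph V) : SimpleGraph (Option (V ⊕ V)) :=
  SimpleGraph.fromRel (fun x y =>
    (∃ u v, G.Adj u v ∧ x = some (Sum.inl u) ∧ y = some (Sum.inl v)) ∨
    (∃ u v, G.Adj u v ∧ x = some (Sum.inl u) ∧ y = some (Sum.inr v)) ∨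
    (∃ u, x = some (Sum.inr u) ∧ y = none))

/-- `S` is a general position set: no shortest path between two vertices of `S`
contains a third element of `S`. -/
def IsGPSet (G : SimpleGraph V) (S : Set V) : Prop :=
  ∀ u ∈ S, ∀ v ∈ S, ∀ p : G.Walk u v, p.length = G.dist u v →
    ∀ w ∈ S, w ∈ p.support → w = u ∨ w = v

/-- The general position number of `G`: the maximum cardinality of a general position set. -/
noncomputable def gpNumber (G : SimpleGraph V) [Fintype V] : ℕ :=
  sSup {k | ∃ S : Set V, IsGPSet G S ∧ S.ncard = k}

/-- A gp-set: a general position set of maximum cardinality. -/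
def IsGpSet (G : SimpleGraph V) [Fintype V] (S : Set V) : Prop :=
  IsGPSet G S ∧ S.ncard = gpNumber G

/-- The independence number of `G`. -/
noncomputable def indepNumber (G : SimpleGraph V) [Fintype V] : ℕ :=
  sSup {k | ∃ S : Set V, (∀ u ∈ S, ∀ v ∈ S, ¬ G.Adj u v) ∧ S.ncard = k}

section Aux

variable {G : SimpleGraph V}

lemma myc_adj_inl_inl {u v : V} :
    (Mycielskian G).Adj (some (inl u)) (some (inl v)) ↔ G.Adj u v := by
  simp only [Mycielskian, fromRel_adj]
  constructor
  · rintro ⟨hne, h | h⟩ <;> rcases h with ⟨a,b,hab,h1,h2⟩|⟨a,b,hab,h1,h2⟩|⟨a,h1,h2⟩ <;>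
      simp_all <;> exact hab.symm
  · intro h
    exact ⟨by simp [h.ne], Or.inl (Or.inl ⟨u, v, h, rfl, rfl⟩)⟩

lemma myc_adj_inl_inr {u v : V} :
    (Mycielskian G).Adj (some (inl u)) (some (inr v)) ↔ G.Adj u v := by
  simp only [Mycielskian, fromRel_adj]
  constructor
  · rintro ⟨hne, h | h⟩ <;> rcases h with ⟨a,b,hab,h1,h2⟩|⟨a,b,hab,h1,h2⟩|⟨a,h1,h2⟩ <;>
      simp_all
  · intro h
    exact ⟨by simp, Or.inl (Or.inr (Or.inl ⟨u, v, h, rfl, rfl⟩))⟩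

lemma myc_adj_inr_inl {u v : V} :
    (Mycielskian G).Adj (some (inr u)) (some (inl v)) ↔ G.Adj v u := by
  rw [(Mycielskian G).adj_comm, myc_adj_inl_inr]

lemma myc_not_adj_inr_inr {u v : V} :
    ¬ (Mycielskian G).Adj (some (inr u)) (some (inr v)) := by
  simp only [Mycielskian, fromRel_adj]
  rintro ⟨hne, h | h⟩ <;> rcases h with ⟨a,b,hab,h1,h2⟩|⟨a,b,hab,h1,h2⟩|⟨a,h1,h2⟩ <;> simp_all

lemma myc_adj_inr_none {u : V} : (Mycielskian G).Adj (some (inr u)) none := by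
  simp only [Mycielskian, fromRel_adj]
  refine ⟨by simp, Or.inl (Or.inr (Or.inr ⟨u, rfl, by simp⟩))⟩

lemma myc_adj_none_inr {u : V} : (Mycielskian G).Adj none (some (inr u)) :=
  myc_adj_inr_none.symm

lemma myc_not_adj_inl_none {u : V} : ¬ (Mycielskian G).Adj (some (inl u)) none := by
  simp only [Mycielskian, fromRel_adj]
  rintro ⟨hne, h | h⟩ <;> rcases h with ⟨a,b,hab,h1,h2⟩|⟨a,b,hab,h1,h2⟩|⟨a,h1,h2⟩ <;> simp_all

lemma myc_not_adj_none_inl {u : V} : ¬ (Mycielskian G).Adj none (some (inl u)) :=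
  fun h => myc_not_adj_inl_none h.symm

/-- If `x ≠ y` are nonadjacent but have a common neighbor, the distance is 2. -/
lemma dist_eq_two_of' {W : Type*} {H : SimpleGraph W} {x y z : W} (hxy : x ≠ y)
    (hna : ¬ H.Adj x y) (h1 : H.Adj x z) (h2 : H.Adj z y) : H.dist x y = 2 := by
  have hle : H.dist x y ≤ 2 := by
    simpa using SimpleGraph.dist_le (Walk.cons h1 (Walk.cons h2 Walk.nil))
  have hr : H.Reachable x y := ⟨Walk.cons h1 (Walk.cons h2 Walk.nil)⟩
  have h0 : 0 < H.dist x y := hr.pos_dist_of_ne hxy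
  have h1' : H.dist x y ≠ 1 := fun h => hna (SimpleGraph.dist_eq_one_iff_adj.mp h)
  omega

/-- General position rules out a third `S`-vertex in the middle of a geodesic of length 2. -/
lemma gp_two {W : Type*} {H : SimpleGraph W} {S : Set W} (hS : IsGPSet H S) {x y z : W}
    (hx : x ∈ S) (hy : y ∈ S) (hz : z ∈ S) (hxy : x ≠ y) (hna : ¬H.Adj x y)
    (h1 : H.Adj x z) (h2 : H.Adj z y) : z = x ∨ z = y := by
  have hd := dist_eq_two_of' hxy hna h1 h2
  exact hS x hx y hy (Walk.cons h1 (Walk.cons h2 Walk.nil)) (by simp [hd]) z hz (by simp)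

/-- General position rules out a third `S`-vertex on a geodesic of length 3. -/
lemma gp_three {W : Type*} {H : SimpleGraph W} {S : Set W} (hS : IsGPSet H S) {x y a b : W}
    (hx : x ∈ S) (hy : y ∈ S) (hb : b ∈ S) (hxy : x ≠ y) (hna : ¬H.Adj x y)
    (hno : ∀ z, H.Adj x z → ¬H.Adj z y)
    (h1 : H.Adj x a) (h2 : H.Adj a b) (h3 : H.Adj b y) : b = x ∨ b = y := by
  have hr : H.Reachable x y := ⟨Walk.cons h1 (Walk.cons h2 (Walk.cons h3 Walk.nil))⟩
  have hle : H.dist x y ≤ 3 := by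
    simpa using SimpleGraph.dist_le (Walk.cons h1 (Walk.cons h2 (Walk.cons h3 Walk.nil)))
  have h0 : 0 < H.dist x y := hr.pos_dist_of_ne hxy
  have hne1 : H.dist x y ≠ 1 := fun h => hna (SimpleGraph.dist_eq_one_iff_adj.mp h)
  have hne2 : H.dist x y ≠ 2 := by
    intro h
    obtain ⟨p, hp⟩ := SimpleGraph.exists_walk_of_dist_ne_zero (show H.dist x y ≠ 0 by omega)
    rw [h] at hp
    cases p with
    | nil => simp at hp
    | cons h1' q =>
      cases q with
      | nil => simp at hp
      | cons h2' q2 =>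
        cases q2 with
        | nil => exact hno _ h1' h2'
        | cons h3' q3 => simp only [SimpleGraph.Walk.length_cons] at hp; omega
  have hd : H.dist x y = 3 := by omega
  exact hS x hx y hy (Walk.cons h1 (Walk.cons h2 (Walk.cons h3 Walk.nil)))
    (by simp [hd]) b hb (by simp)

end Aux

section Main

variable [Fintype V] {G : SimpleGraph V}

lemma indep_ncard_le (G : SimpleGraph V) {T : Set V}
    (hT : ∀ u ∈ T, ∀ v ∈ T, ¬ G.Adj u v) : T.ncard ≤ indepNumber G := by
  classical
  apply le_csSup
  · refine ⟨Fintype.card V, ?_⟩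
    rintro k ⟨T', -, rfl⟩
    calc T'.ncard ≤ (Set.univ : Set V).ncard :=
          Set.ncard_le_ncard (Set.subset_univ _) Set.finite_univ
      _ = Fintype.card V := by rw [Set.ncard_univ, Nat.card_eq_fintype_card]
  · exact ⟨T, hT, rfl⟩

lemma two_le_indepNumber (G : SimpleGraph V) (hne : G ≠ ⊤) : 2 ≤ indepNumber G := by
  classical
  have h : ∃ a b : V, a ≠ b ∧ ¬ G.Adj a b := by
    by_contra h
    push_neg at h
    apply hne
    ext a b
    simp only [top_adj]
    exact ⟨fun hadj => hadj.ne, fun hab => h a b hab⟩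
  obtain ⟨a, b, hab, hnab⟩ := h
  have hpair : ({a, b} : Set V).ncard = 2 := Set.ncard_pair hab
  have hind : ∀ u ∈ ({a, b} : Set V), ∀ v ∈ ({a, b} : Set V), ¬ G.Adj u v := by
    rintro u (rfl | rfl) v (rfl | rfl)
    · exact G.irrefl
    · exact hnab
    · exact fun h => hnab h.symm
    · exact G.irrefl
  have := indep_ncard_le G hind
  omega

/-- The key bound: any general position set of the Mycielskian has at most
`n + α - 1` vertices. -/
lemma gp_set_bound (G : SimpleGraph V) (hne : G ≠ ⊤) (hδ : ∀ v : V, ∃ u, G.Adj v u)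
    {S : Set (Option (V ⊕ V))} (hS : IsGPSet (Mycielskian G) S) :
    S.ncard + 1 ≤ Fintype.card V + indepNumber G := by
  classical
  set M := Mycielskian G with hM
  set SA : Set V := {v : V | some (inl v) ∈ S} with hSA
  set SB : Set V := {v : V | some (inr v) ∈ S} with hSB
  have hα : 2 ≤ indepNumber G := two_le_indepNumber G hne
  have hn : (Set.univ : Set V).ncard = Fintype.card V := by
    rw [Set.ncard_univ, Nat.card_eq_fintype_card]
  have hinjl : Function.Injective (fun v : V => (some (inl v) : Option (V ⊕ V))) :=
    fun a b hab => by simpa using hab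
  have hinjr : Function.Injective (fun v : V => (some (inr v) : Option (V ⊕ V))) :=
    fun a b hab => by simpa using hab
  have hsub : S ⊆ insert none ((fun v : V => (some (inl v) : Option (V ⊕ V))) '' SA ∪
      (fun v : V => (some (inr v) : Option (V ⊕ V))) '' SB) := by
    rintro (_ | (x | x)) hx
    · exact Set.mem_insert _ _
    · exact Set.mem_insert_of_mem _ (Or.inl ⟨x, hx, rfl⟩)
    · exact Set.mem_insert_of_mem _ (Or.inr ⟨x, hx, rfl⟩)
  have hcard_union : ((fun v : V => (some (inl v) : Option (V ⊕ V))) '' SA ∪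
      (fun v : V => (some (inr v) : Option (V ⊕ V))) '' SB).ncard ≤ SA.ncard + SB.ncard := by
    calc _ ≤ _ + _ := Set.ncard_union_le _ _
      _ = SA.ncard + SB.ncard := by
          rw [Set.ncard_image_of_injective _ hinjl, Set.ncard_image_of_injective _ hinjr]
  have hABn : (SA ∪ SB).ncard ≤ Fintype.card V := by
    rw [← hn]; exact Set.ncard_le_ncard (Set.subset_univ _) Set.finite_univ
  by_cases hroot : none ∈ S
  · -- Case: the root is in S.
    have hcount : S.ncard ≤ SA.ncard + SB.ncard + 1 := by
      calc S.ncard ≤ _ := Set.ncard_le_ncard hsub (Set.toFinite _)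
        _ ≤ _ + 1 := Set.ncard_insert_le _ _
        _ ≤ SA.ncard + SB.ncard + 1 := by omega
    -- |SB| ≤ 1
    have hSB1 : SB.ncard ≤ 1 := by
      by_contra h
      push_neg at h
      obtain ⟨x, y, hx, hy, hxy⟩ := (Set.one_lt_ncard_iff (Set.toFinite SB)).mp h
      have := gp_two hS hx hy hroot (by simp [hxy]) myc_not_adj_inr_inr
        myc_adj_inr_none (myc_adj_none_inr)
      simp at this
    -- SA ≠ univ
    have hSAne : SA ≠ Set.univ := by
      intro hall'
      have hall : ∀ v : V, some (inl v) ∈ S := fun v => by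
        have : v ∈ SA := hall' ▸ Set.mem_univ v
        exact this
      have h : ∃ a b : V, a ≠ b ∧ ¬ G.Adj a b := by
        by_contra h
        push_neg at h
        apply hne
        ext a b
        simp only [top_adj]
        exact ⟨fun hadj => hadj.ne, fun hab => h a b hab⟩
      obtain ⟨a, b, hab, hnab⟩ := h
      have hne_ab : (some (inl a) : Option (V ⊕ V)) ≠ some (inl b) := by simp [hab]
      have hnadj_ab : ¬ M.Adj (some (inl a)) (some (inl b)) := fun h =>
        hnab (myc_adj_inl_inl.mp h)
      obtain ⟨wa, hwa⟩ := hδ a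
      obtain ⟨wb, hwb⟩ := hδ b
      -- the walk a - wa' - u* - wb' - b
      have e1 : M.Adj (some (inl a)) (some (inr wa)) := myc_adj_inl_inr.mpr hwa
      have e2 : M.Adj (some (inr wa)) none := myc_adj_inr_none
      have e3 : M.Adj none (some (inr wb)) := myc_adj_none_inr
      have e4 : M.Adj (some (inr wb)) (some (inl b)) := myc_adj_inr_inl.mpr hwb
      set W4 : M.Walk (some (inl a)) (some (inl b)) :=
        Walk.cons e1 (Walk.cons e2 (Walk.cons e3 (Walk.cons e4 Walk.nil))) with hW4
      have hr : M.Reachable (some (inl a)) (some (inl b)) := ⟨W4⟩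
      have hle4 : M.dist (some (inl a)) (some (inl b)) ≤ 4 := by
        simpa [hW4] using SimpleGraph.dist_le W4
      have h0 : 0 < M.dist (some (inl a)) (some (inl b)) := hr.pos_dist_of_ne hne_ab
      have hne1 : M.dist (some (inl a)) (some (inl b)) ≠ 1 := fun h =>
        hnadj_ab (SimpleGraph.dist_eq_one_iff_adj.mp h)
      have hd234 : M.dist (some (inl a)) (some (inl b)) = 2 ∨
          M.dist (some (inl a)) (some (inl b)) = 3 ∨
          M.dist (some (inl a)) (some (inl b)) = 4 := by omega
      rcases hd234 with hd | hd | hd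
      · -- distance 2
        obtain ⟨p, hp⟩ := SimpleGraph.exists_walk_of_dist_ne_zero
          (show M.dist (some (inl a)) (some (inl b)) ≠ 0 by omega)
        rw [hd] at hp
        cases p with
        | nil => simp at hp
        | cons h1 q =>
          rename_i z1
          cases q with
          | nil => simp at hp
          | cons h2 q2 =>
            cases q2 with
            | nil =>
              rcases z1 with _ | (x | x)
              · exact myc_not_adj_inl_none h1
              · have := hS _ (hall a) _ (hall b) (Walk.cons h1 (Walk.cons h2 Walk.nil))
                  (by simp [hd]) _ (hall x) (by simp)
                rcases this with h | h
                · rw [show x = a by simpa using h] at h1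
                  exact M.irrefl h1
                · rw [show x = b by simpa using h] at h2
                  exact M.irrefl h2
              · have hax : G.Adj a x := myc_adj_inl_inr.mp h1
                have hbx : G.Adj b x := myc_adj_inr_inl.mp h2
                have := gp_two hS (hall a) (hall b) (hall x) hne_ab hnadj_ab
                  (myc_adj_inl_inl.mpr hax) (myc_adj_inl_inl.mpr hbx.symm)
                rcases this with h | h
                · rw [show x = a by simpa using h] at hax
                  exact G.irrefl hax
                · rw [show x = b by simpa using h] at hax
                  exact hnab hax
            | cons h3' q3 => simp only [SimpleGraph.Walk.length_cons] at hp; omega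
      · -- distance 3
        obtain ⟨p, hp⟩ := SimpleGraph.exists_walk_of_dist_ne_zero
          (show M.dist (some (inl a)) (some (inl b)) ≠ 0 by omega)
        rw [hd] at hp
        cases p with
        | nil => simp at hp
        | cons h1 q =>
          rename_i z1
          cases q with
          | nil => simp at hp
          | cons h2 q2 =>
            rename_i z2
            cases q2 with
            | nil => simp at hp
            | cons h3 q3 =>
              cases q3 with
              | nil =>
                rcases z1 with _ | (x | x)
                · exact myc_not_adj_inl_none h1
                · have := hS _ (hall a) _ (hall b)
                    (Walk.cons h1 (Walk.cons h2 (Walk.cons h3 Walk.nil)))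
                    (by simp [hd]) _ (hall x) (by simp)
                  rcases this with h | h
                  · rw [show x = a by simpa using h] at h1
                    exact M.irrefl h1
                  · rw [show x = b by simpa using h] at h1
                    exact hnab (myc_adj_inl_inl.mp h1)
                · rcases z2 with _ | (y | y)
                  · exact myc_not_adj_none_inl h3
                  · have := hS _ (hall a) _ (hall b)
                      (Walk.cons h1 (Walk.cons h2 (Walk.cons h3 Walk.nil)))
                      (by simp [hd]) _ (hall y) (by simp)
                    rcases this with h | h
                    · rw [show y = a by simpa using h] at h3
                      exact hnab (myc_adj_inl_inl.mp h3)
                    · rw [show y = b by simpa using h] at h3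
                      exact M.irrefl h3
                  · exact myc_not_adj_inr_inr h2
              | cons h4 q4 => simp only [SimpleGraph.Walk.length_cons] at hp; omega
      · -- distance 4: the walk through the root is a geodesic
        have := hS _ (hall a) _ (hall b) W4 (by simp [hW4, hd]) none hroot (by simp [hW4])
        simp at this
    have hSAlt : SA.ncard < Fintype.card V := by
      rw [← hn]
      exact Set.ncard_lt_ncard (Set.ssubset_univ_iff.mpr hSAne) Set.finite_univ
    omega
  · -- Case: the root is not in S.
    have hcount : S.ncard ≤ SA.ncard + SB.ncard := by
      have hsub' : S ⊆ (fun v : V => (some (inl v) : Option (V ⊕ V))) '' SA ∪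
          (fun v : V => (some (inr v) : Option (V ⊕ V))) '' SB := by
        rintro (_ | (x | x)) hx
        · exact absurd hx hroot
        · exact Or.inl ⟨x, hx, rfl⟩
        · exact Or.inr ⟨x, hx, rfl⟩
      calc S.ncard ≤ _ := Set.ncard_le_ncard hsub' (Set.toFinite _)
        _ ≤ SA.ncard + SB.ncard := hcard_union
    have hIE : SA.ncard + SB.ncard = (SA ∪ SB).ncard + (SA ∩ SB).ncard := by
      rw [← Set.ncard_union_add_ncard_inter SA SB (Set.toFinite _) (Set.toFinite _)]
    set C : Set V := SA ∩ SB with hC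
    -- F1: a vertex of C has no neighbor in SA
    have hCind : ∀ x ∈ C, ∀ y, G.Adj x y → y ∉ SA := by
      intro x hx y hxy hy
      have hd2 : ¬ M.Adj (some (inl x)) (some (inr x)) := fun h =>
        G.irrefl (myc_adj_inl_inr.mp h)
      have := gp_two hS hx.1 hx.2 hy (by simp) hd2
        (myc_adj_inl_inl.mpr hxy) (myc_adj_inl_inr.mpr hxy.symm)
      rcases this with h | h
      · exact G.irrefl (by rwa [show y = x by simpa using h] at hxy)
      · simp at h
    have hCindep : ∀ u ∈ C, ∀ v ∈ C, ¬ G.Adj u v :=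
      fun u hu v hv h => hCind u hu v h hv.1
    by_cases hC2 : 1 < C.ncard
    · obtain ⟨x1, x2, hx1, hx2, hx12⟩ := (Set.one_lt_ncard_iff (Set.toFinite C)).mp hC2
      by_cases hout : ∃ x ∈ C, ∃ w, G.Adj x w ∧ w ∉ SB
      · -- some vertex outside SA ∪ SB
        obtain ⟨x, hx, w, hxw, hwB⟩ := hout
        have hwA : w ∉ SA := hCind x hx w hxw
        have hwAB : w ∉ SA ∪ SB := by rintro (h | h) <;> [exact hwA h; exact hwB h]
        have hABlt : (SA ∪ SB).ncard < Fintype.card V := by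
          rw [← hn]
          refine Set.ncard_lt_ncard ?_ Set.finite_univ
          exact Set.ssubset_univ_iff.mpr (fun h => hwAB (h ▸ Set.mem_univ w))
        have hCα : C.ncard ≤ indepNumber G := indep_ncard_le G hCindep
        omega
      · push_neg at hout
        -- every neighbor of a vertex of C lies in SB; each x ∈ C has a unique neighbor
        have huniq : ∀ x ∈ C, ∀ w w', G.Adj x w → G.Adj x w' → w = w' := by
          intro x hx w w' hw hw'
          by_contra hne'
          have hwB : w ∈ SB := hout x hx w hw
          have hw'B : w' ∈ SB := hout x hx w' hw'
          have := gp_two hS hwB hw'B hx.1 (by simp [hne']) myc_not_adj_inr_inr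
            (myc_adj_inr_inl.mpr hw) (myc_adj_inl_inr.mpr hw')
          simp at this
        obtain ⟨w1, hw1⟩ := hδ x1
        obtain ⟨w2, hw2⟩ := hδ x2
        have hw1B : w1 ∈ SB := hout x1 hx1 w1 hw1
        have hw2B : w2 ∈ SB := hout x2 hx2 w2 hw2
        have hnx12 : ¬ G.Adj x1 x2 := hCindep x1 hx1 x2 hx2
        exfalso
        by_cases hw12 : w1 = w2
        · -- x1 and x2 share their unique neighbor: violation via x1 - w1' - x2
          have := gp_two hS hx1.1 hx2.1 hw1B (by simp [hx12])
            (fun h => hnx12 (myc_adj_inl_inl.mp h))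
            (myc_adj_inl_inr.mpr hw1) (myc_adj_inr_inl.mpr (hw12 ▸ hw2))
          simp at this
        · -- w1 ≠ w2 : violation via geodesic x1' - u* - w2' - x2 of length 3
          have hkey : ∀ z, M.Adj (some (inr x1)) z → ¬ M.Adj z (some (inl x2)) := by
            rintro (_ | (t | t)) h1 h2
            · exact myc_not_adj_none_inl h2
            · have ht1 : G.Adj x1 t := (myc_adj_inr_inl.mp h1).symm
              have ht2 : G.Adj x2 t := (myc_adj_inl_inl.mp h2).symm
              exact hw12 ((huniq x1 hx1 w1 t hw1 ht1).trans (huniq x2 hx2 t w2 ht2 hw2))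
            · exact myc_not_adj_inr_inr h1
          have hna' : ¬ M.Adj (some (inr x1)) (some (inl x2)) := fun h =>
            hnx12 (myc_adj_inr_inl.mp h).symm
          have := gp_three hS hx1.2 hx2.1 hw2B (by simp) hna' hkey
            myc_adj_inr_none myc_adj_none_inr (myc_adj_inr_inl.mpr hw2)
          rcases this with h | h
          · have hw2x1 : w2 = x1 := by simpa using h
            exact hnx12 (by rw [← hw2x1]; exact hw2.symm)
          · simp at h
    · -- |C| ≤ 1
      omega

end Main

/-- For a non-complete graph `G` of order `n` with no vertex of degree
zero (minimum degree `δ ≥ 1`) and independence number `α`,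
`gp(μ(G)) ≤ n + α - 1`. -/
theorem gpNumber_mycielskian_upper_bound' [Fintype V] (G : SimpleGraph V)
    (hne : G ≠ ⊤) (hδ : ∀ v : V, ∃ u, G.Adj v u) :
    gpNumber (Mycielskian G) + 1 ≤ Fintype.card V + indepNumber G := by
  classical
  have hα : 2 ≤ indepNumber G := two_le_indepNumber G hne
  have hmain : ∀ k ∈ {k | ∃ S : Set (Option (V ⊕ V)), IsGPSet (Mycielskian G) S ∧ S.ncard = k},
      k ≤ Fintype.card V + indepNumber G - 1 := by
    rintro k ⟨S, hS, rfl⟩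
    have := gp_set_bound G hne hδ hS
    omega
  have hnonempty : {k | ∃ S : Set (Option (V ⊕ V)), IsGPSet (Mycielskian G) S ∧ S.ncard = k}.Nonempty := by
    refine ⟨0, ∅, ?_, by simp⟩
    intro u hu
    exact absurd hu (Set.notMem_empty u)
  have hsup : gpNumber (Mycielskian G) ≤ Fintype.card V + indepNumber G - 1 :=
    csSup_le hnonempty hmain
  omega
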